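/- Let β ⊆ α be compositions with N = |α|−|β| ≥ 1. Then: (1) whenever S, T ∈ SIT(α/β) with T = π_i^{rdI}(S) and T ≠ S, one has inv(T) = inv(S) + 1, so the poset on SIT(α/β) generated by the operators π_i^{rdI} is graded with rank function T ↦ inv(T) − inv(S^0_{α/β}); (2) inv(S^{row}_{α/β}) = C(N, 2); (3) inv(S^0_{α/β}) = Σ_{i=1}^{ℓ(β)} C(α_i − β_i, 2) + Σ_{i=ℓ(β)+1}^{ℓ(α)} C(α_i + i − ℓ(β) − 1, 2) − C(ℓ(α) − ℓ(β), 3); hence the total rank of the poset is C(N,2) − Σ_{i=1}^{ℓ(β)} C(α_i − β_i, 2) − Σ_{i=ℓ(β)+1}^{ℓ(α)} C(α_i + i − ℓ(β) − 1, 2) + C(ℓ(α) − ℓ(β), 3). Here C(a,b) denotes the binomial coefficient a choose b. -/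

import Mathlib

open scoped Classical

namespace ImmaculateSkew

/-- `part α i` is the `i`-th part (0-indexed) of the composition `α`, or `0` if out of range. -/
def part (α : List ℕ) (i : ℕ) : ℕ := α.getD i 0

/-- a composition: a list of positive integers -/
def IsComposition (α : List ℕ) : Prop := ∀ x ∈ α, 0 < x

/-- `β ⊆ α` for compositions -/
def SubComp (β α : List ℕ) : Prop :=
  β.length ≤ α.length ∧ ∀ j < β.length, part β j ≤ part α j

/-- cell `(i, j)` (row `i` from the bottom, column `j`, both 0-indexed) lies in the diagram of `α` -/
def InDiagram (α : List ℕ) (c : ℕ × ℕ) : Prop :=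
  c.1 < α.length ∧ c.2 < part α c.1

/-- cell lies in the skew diagram `α/β` -/
def InSkew (α β : List ℕ) (c : ℕ × ℕ) : Prop :=
  InDiagram α c ∧ ¬ InDiagram β c

/-- the finite set of cells of the skew diagram `α/β` -/
noncomputable def skewCells (α β : List ℕ) : Finset (ℕ × ℕ) :=
  (Finset.range α.length ×ˢ Finset.range (α.sum + 1)).filter (InSkew α β)

/-- `N = |α| - |β|` -/
def skewSize (α β : List ℕ) : ℕ := α.sum - β.sum

/-- a filling of the cells of `α/β` using each entry of `E` exactly once, zero off the diagram -/
structure IsStdOn (α β : List ℕ) (E : Finset ℕ) (T : ℕ × ℕ → ℕ) : Prop where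
  zero_off : ∀ c, ¬ InSkew α β c → T c = 0
  mem : ∀ c, InSkew α β c → T c ∈ E
  inj : ∀ c c', InSkew α β c → InSkew α β c' → T c = T c' → c = c'
  surj : ∀ v ∈ E, ∃ c, InSkew α β c ∧ T c = v

/-- row entries strictly increase left to right -/
def RowsStrict (α β : List ℕ) (T : ℕ × ℕ → ℕ) : Prop :=
  ∀ i j j', j < j' → InSkew α β (i, j) → InSkew α β (i, j') → T (i, j) < T (i, j')

/-- row entries weakly increase left to right -/
def RowsWeak (α β : List ℕ) (T : ℕ × ℕ → ℕ) : Prop :=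
  ∀ i j j', j < j' → InSkew α β (i, j) → InSkew α β (i, j') → T (i, j) ≤ T (i, j')

/-- all column entries strictly increase bottom to top -/
def ColsStrict (α β : List ℕ) (T : ℕ × ℕ → ℕ) : Prop :=
  ∀ i i' j, i < i' → InSkew α β (i, j) → InSkew α β (i', j) → T (i, j) < T (i', j)

/-- all column entries weakly increase bottom to top -/
def ColsWeak (α β : List ℕ) (T : ℕ × ℕ → ℕ) : Prop :=
  ∀ i i' j, i < i' → InSkew α β (i, j) → InSkew α β (i', j) → T (i, j) ≤ T (i', j)

/-- the column-1 entries (those in `α/β`) strictly increase bottom to top -/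
def FirstColStrict (α β : List ℕ) (T : ℕ × ℕ → ℕ) : Prop :=
  ∀ i i', i < i' → InSkew α β (i, 0) → InSkew α β (i', 0) → T (i, 0) < T (i', 0)

/-- the column-1 entries (those in `α/β`) weakly increase bottom to top -/
def FirstColWeak (α β : List ℕ) (T : ℕ × ℕ → ℕ) : Prop :=
  ∀ i i', i < i' → InSkew α β (i, 0) → InSkew α β (i', 0) → T (i, 0) ≤ T (i', 0)

/-- standard immaculate tableau of shape `α/β` with entry set `E` -/
def IsSITOn (α β : List ℕ) (E : Finset ℕ) (T : ℕ × ℕ → ℕ) : Prop :=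
  IsStdOn α β E T ∧ RowsStrict α β T ∧ FirstColStrict α β T

/-- standard immaculate tableau of shape `α/β` (entries `1, …, N`) -/
def IsSIT (α β : List ℕ) (T : ℕ × ℕ → ℕ) : Prop :=
  IsSITOn α β (Finset.Icc 1 (skewSize α β)) T

/-- standard extended tableau: all columns increase bottom to top -/
def IsSET (α β : List ℕ) (T : ℕ × ℕ → ℕ) : Prop :=
  IsSIT α β T ∧ ColsStrict α β T

/-- the four descent-set variants -/
inductive Variant | dI | rdI | Astar | Abar

/-- `rowRel a r r'`: the relation required between the row `r` containing `i` and the row `r'`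
containing `i+1` for `i` to be an `a`-descent -/
def rowRel : Variant → ℕ → ℕ → Prop
  | .dI    => fun r r' => r < r'
  | .rdI   => fun r r' => r' ≤ r
  | .Astar => fun r r' => r' < r
  | .Abar  => fun r r' => r ≤ r'

/-- the `a`-descent set of a tableau -/
noncomputable def Des (a : Variant) (α β : List ℕ) (T : ℕ × ℕ → ℕ) : Finset ℕ :=
  (Finset.Icc 1 (skewSize α β - 1)).filter fun k =>
    ∃ c c', InSkew α β c ∧ InSkew α β c' ∧ T c = k ∧ T c' = k + 1 ∧ rowRel a c.1 c'.1

/-- interchange the entries `i` and `i+1` -/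
def swapEntries (i : ℕ) (T : ℕ × ℕ → ℕ) : ℕ × ℕ → ℕ :=
  fun c => if T c = i then i + 1 else if T c = i + 1 then i else T c

/-- the 0-Hecke operator `π_i^a` on `SIT(α/β) ∪ {0}` (the zero function plays the role of `0`) -/
noncomputable def piOp (a : Variant) (α β : List ℕ) (i : ℕ) (T : ℕ × ℕ → ℕ) : ℕ × ℕ → ℕ :=
  if i ∈ Des a α β T then
    (if IsSIT α β (swapEntries i T) then swapEntries i T else fun _ => 0)
  else T

/-- the fundamental quasisymmetric function `F_{comp(D)}` for `D ⊆ {1,…,N-1}`, as a power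
series in the variables `x_1, x_2, …` (variable `x_n` is `X n`; `x_0` is unused) -/
noncomputable def Fund (N : ℕ) (D : Finset ℕ) : MvPowerSeries ℕ ℚ :=
  fun d => (Nat.card {f : Fin N → ℕ //
    (∀ j, 1 ≤ f j) ∧
    (∀ j k : Fin N, j ≤ k → f j ≤ f k) ∧
    (∀ (j : ℕ) (_ : 1 ≤ j) (h2 : j < N), j ∈ D → f ⟨j - 1, by omega⟩ < f ⟨j, h2⟩) ∧
    (∑ j, Finsupp.single (f j) 1) = d} : ℚ)

/-- the generating function `Σ_T x^T` over all fillings of the given cells with positive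
integers satisfying the predicate `P` (and equal to `0` off the given cells) -/
noncomputable def genF (cs : Finset (ℕ × ℕ)) (P : (ℕ × ℕ → ℕ) → Prop) :
    MvPowerSeries ℕ ℚ :=
  fun d => (Nat.card {T : ℕ × ℕ → ℕ //
    (∀ c, c ∉ cs → T c = 0) ∧ (∀ c ∈ cs, 1 ≤ T c) ∧ P T ∧
    (∑ c ∈ cs, Finsupp.single (T c) 1) = d} : ℚ)

/-- complete homogeneous symmetric function `h_r` -/
noncomputable def hFun (r : ℕ) : MvPowerSeries ℕ ℚ :=
  fun d => (Nat.card {f : Fin r → ℕ //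
    (∀ j, 1 ≤ f j) ∧ (∀ j k : Fin r, j ≤ k → f j ≤ f k) ∧
    (∑ j, Finsupp.single (f j) 1) = d} : ℚ)

/-- elementary symmetric function `e_r` -/
noncomputable def eFun (r : ℕ) : MvPowerSeries ℕ ℚ :=
  fun d => (Nat.card {f : Fin r → ℕ //
    (∀ j, 1 ≤ f j) ∧ (∀ j k : Fin r, j < k → f j < f k) ∧
    (∑ j, Finsupp.single (f j) 1) = d} : ℚ)

/-- send a filling to the corresponding basis vector of the free `ℚ`-vector space on
`SIT(α/β)`, or to the zero vector if it is not a standard immaculate tableau -/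
noncomputable def toBasis (α β : List ℕ) (U : ℕ × ℕ → ℕ) :
    ({T : ℕ × ℕ → ℕ // IsSIT α β T} →₀ ℚ) :=
  if h : IsSIT α β U then Finsupp.single ⟨U, h⟩ 1 else 0

/-- the linear extension of `π_i^a` to the free `ℚ`-vector space on `SIT(α/β)` -/
noncomputable def piLin (a : Variant) (α β : List ℕ) (i : ℕ) :
    ({T : ℕ × ℕ → ℕ // IsSIT α β T} →₀ ℚ) →ₗ[ℚ]
      ({T : ℕ × ℕ → ℕ // IsSIT α β T} →₀ ℚ) :=
  Finsupp.lift _ ℚ _ (fun T => toBasis α β (piOp a α β i T.1))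

/-- one step: the tableau `T` is obtained from `S` by applying one operator `π_i^a` -/
def stepRel (a : Variant) (α β : List ℕ) (S T : ℕ × ℕ → ℕ) : Prop :=
  IsSIT α β T ∧ ∃ i, 1 ≤ i ∧ i ≤ skewSize α β - 1 ∧ piOp a α β i S = T

/-- `T` is obtained from `S` by applying a (possibly empty) sequence of operators `π_i^a`,
all intermediate results being tableaux -/
def reach (a : Variant) (α β : List ℕ) : (ℕ × ℕ → ℕ) → (ℕ × ℕ → ℕ) → Prop :=
  Relation.ReflTransGen (stepRel a α β)

/-- the number of skew cells of `α/β` strictly above row `i` other than column-1 cells -/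
noncomputable def aboveCount (α β : List ℕ) (i : ℕ) : ℕ :=
  ∑ i' ∈ Finset.Ico (i + 1) α.length,
    (if i' < β.length then part α i' - part β i' else part α i' - 1)

/-- the tableau `S^0_{α/β}`: the column-1 cells of `α/β` are filled with `1, …, ℓ(α)-ℓ(β)`
bottom to top, then the remaining cells are filled row by row, top to bottom, left to right,
with consecutive integers -/
noncomputable def S0 (α β : List ℕ) : ℕ × ℕ → ℕ :=
  fun c =>
    if InSkew α β c then
      if c.2 = 0 ∧ β.length ≤ c.1 then c.1 - β.length + 1
      else (α.length - β.length) + aboveCount α β c.1 +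
        (if c.1 < β.length then c.2 - part β c.1 + 1 else c.2)
    else 0

/-- the row superstandard tableau `S^{row}_{α/β}`: rows filled left to right with `1, 2, …, N`,
bottom row first -/
noncomputable def Srow (α β : List ℕ) : ℕ × ℕ → ℕ :=
  fun c =>
    if InSkew α β c then
      (∑ i' ∈ Finset.range c.1, (part α i' - part β i')) + (c.2 - part β c.1 + 1)
    else 0

/-- `c` is read before `c'` in the reading word (rows top to bottom, right to left in a row) -/
def readBefore (c c' : ℕ × ℕ) : Prop :=
  c'.1 < c.1 ∨ (c.1 = c'.1 ∧ c'.2 < c.2)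

/-- the number of inversions of the reading word of a tableau of shape `α/β` -/
noncomputable def invNum (α β : List ℕ) (T : ℕ × ℕ → ℕ) : ℕ :=
  ((skewCells α β ×ˢ skewCells α β).filter
    (fun p => readBefore p.1 p.2 ∧ T p.2 < T p.1)).card

/-- `φ_U(T)`: fill the cells of `β` by `U` and those of `α/β` by `T` with all entries of `T`
shifted up by `m = |β|` -/
noncomputable def phiU (α β : List ℕ) (U T : ℕ × ℕ → ℕ) : ℕ × ℕ → ℕ :=
  fun c => if InDiagram β c then U c else if InSkew α β c then T c + β.sum else 0

/-- restriction `T_{≤ m}` of `T` to entries `≤ m` -/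
def restrLe (m : ℕ) (T : ℕ × ℕ → ℕ) : ℕ × ℕ → ℕ :=
  fun c => if T c ≤ m then T c else 0

/-- restriction `T_{> m}` of `T` to entries `> m` -/
def restrGt (m : ℕ) (T : ℕ × ℕ → ℕ) : ℕ × ℕ → ℕ :=
  fun c => if m < T c then T c else 0

/-- standardisation `std(T_{>m})`: keep the entries `> m` and subtract `m` from each -/
def stdGt (m : ℕ) (T : ℕ × ℕ → ℕ) : ℕ × ℕ → ℕ :=
  fun c => if m < T c then T c - m else 0

/-- `T ∈ X_{α,β}`: `T ∈ SIT(α)` and the entries `> |β|` of `T` occupy exactly the cells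
of `α/β` -/
def memX (α β : List ℕ) (T : ℕ × ℕ → ℕ) : Prop :=
  IsSIT α [] T ∧ ∀ c, InDiagram α c → (β.sum < T c ↔ ¬ InDiagram β c)

/-! Interchanging the entries `i` and `i + 1` changes the relative order of exactly one pair of
cells. When `π_i^{rdI}` acts nontrivially, `i + 1` lies strictly below `i` (in the same row the
swap would break row-strictness), so that pair becomes a new inversion. In `S^row` every pair of
cells is an inversion. In `S^0` the inversions are the pairs inside one row together with the
pairs whose second cell is a first-column cell above the rows of `β`. With rows indexed from `0`
this gives `Σ_i C(α_i - β_i, 2) + Σ_i (α_i - β_i) (i - ℓ(β))`; expanding `C(α_i + i - ℓ(β), 2)`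
for the rows above `β` and using `Σ_{k < n} C(k, 2) = C(n, 3)` turns it into the stated formula. -/

open Finset

lemma card_filter_product {ι κ : Type*} (s : Finset ι) (t : Finset κ) (P : ι × κ → Prop)
    [DecidablePred P] : #{x ∈ s ×ˢ t | P x} = ∑ a ∈ s, #{b ∈ t | P (a, b)} := by
  simp only [card_filter, sum_product]

lemma sum_Ico_sub_eq_choose_two (a b : ℕ) : ∑ j ∈ Ico b a, (j - b) = (a - b).choose 2 := by
  rw [sum_Ico_eq_sum_range, Nat.choose_two_right, ← sum_range_id]
  exact sum_congr rfl fun k _ => Nat.add_sub_cancel_left _ _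

lemma choose_two_add (a b : ℕ) : (a + b).choose 2 = a.choose 2 + b.choose 2 + a * b := by
  induction b with
  | zero => simp
  | succ b ih =>
    rw [← add_assoc, Nat.choose_succ_succ', Nat.choose_succ_succ' b, ih, Nat.choose_one_right,
      Nat.choose_one_right]
    ring

lemma sum_range_choose_two (n : ℕ) : ∑ k ∈ range n, k.choose 2 = n.choose 3 := by
  induction n with
  | zero => simp
  | succ n ih => rw [sum_range_succ, ih, Nat.choose_succ_succ' n 2, add_comm]

lemma readBefore_iff_toLex_lt {c c' : ℕ × ℕ} : readBefore c c' ↔ toLex c' < toLex c := by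
  rw [Prod.Lex.toLex_lt_toLex, readBefore]
  grind

lemma card_readBefore_pairs (s : Finset (ℕ × ℕ)) :
    #{p ∈ s ×ˢ s | readBefore p.1 p.2} = (#s).choose 2 := by
  let e : ℕ × ℕ ≃ (ℕ ×ₗ ℕ)ᵒᵈ := toLex.trans OrderDual.toDual
  rw [← card_map e.toEmbedding, ← card_product_filter_lt]
  refine card_equiv (e.prodCongr e) fun p => ?_
  simp [e, readBefore_iff_toLex_lt]

noncomputable def inversions (s : Finset (ℕ × ℕ)) (T : ℕ × ℕ → ℕ) : Finset ((ℕ × ℕ) × (ℕ × ℕ)) :=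
  {p ∈ s ×ˢ s | readBefore p.1 p.2 ∧ T p.2 < T p.1}

lemma invNum_eq_card_inversions (α β : List ℕ) (T : ℕ × ℕ → ℕ) :
    invNum α β T = #(inversions (skewCells α β) T) := rfl

lemma swapEntries_lt_swapEntries_iff {S : ℕ × ℕ → ℕ} {i : ℕ} {x y : ℕ × ℕ}
    (h₁ : ¬(S x = i ∧ S y = i + 1)) (h₂ : ¬(S x = i + 1 ∧ S y = i)) :
    swapEntries i S y < swapEntries i S x ↔ S y < S x := by
  simp only [swapEntries]
  split_ifs <;> omega

theorem card_inversions_swapEntries {s : Finset (ℕ × ℕ)} {S : ℕ × ℕ → ℕ} (hS : Set.InjOn S s)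
    {i : ℕ} {c c' : ℕ × ℕ} (hc : c ∈ s) (hc' : c' ∈ s) (hSc : S c = i) (hSc' : S c' = i + 1)
    (hr : readBefore c c') :
    #(inversions s (swapEntries i S)) = #(inversions s S) + 1 := by
  have hnew : (c, c') ∉ inversions s S := by simp [inversions, hSc, hSc']
  suffices inversions s (swapEntries i S) = insert (c, c') (inversions s S) by
    rw [this, card_insert_of_notMem hnew]
  ext ⟨x, y⟩
  by_cases hxy : (x, y) = (c, c')
  · rw [hxy]
    simp only [mem_insert, true_or, iff_true, inversions, mem_filter, mem_product]
    simp [swapEntries, hc, hc', hr, hSc, hSc']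
  simp only [inversions, mem_insert, hxy, false_or, mem_filter, mem_product]
  refine and_congr_right fun ⟨hx, hy⟩ => and_congr_right fun hxy_r =>
    swapEntries_lt_swapEntries_iff ?_ ?_
  · rintro ⟨h₁, h₂⟩
    exact hxy (Prod.ext (hS hx hc (h₁.trans hSc.symm)) (hS hy hc' (h₂.trans hSc'.symm)))
  · rintro ⟨h₁, h₂⟩
    rw [hS hx hc' (h₁.trans hSc'.symm), hS hy hc (h₂.trans hSc.symm),
      readBefore_iff_toLex_lt] at hxy_r
    exact lt_asymm hxy_r (readBefore_iff_toLex_lt.1 hr)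

section SkewDiagram

variable {α β : List ℕ}

lemma part_eq_zero {l : List ℕ} {i : ℕ} (h : l.length ≤ i) : part l i = 0 := by
  rw [part, List.getD_eq_default _ _ h]

lemma IsComposition.part_pos {l : List ℕ} (hl : IsComposition l) {i : ℕ} (hi : i < l.length) :
    0 < part l i := by
  rw [part, List.getD_eq_getElem l 0 hi]
  exact hl _ (List.getElem_mem hi)

lemma part_le_sum (l : List ℕ) (i : ℕ) : part l i ≤ l.sum := by
  rcases lt_or_ge i l.length with h | h
  · rw [part, List.getD_eq_getElem l 0 h]
    exact List.le_sum_of_mem (List.getElem_mem h)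
  · simp [part_eq_zero h]

lemma sum_range_part (l : List ℕ) {n : ℕ} (h : l.length ≤ n) :
    ∑ i ∈ range n, part l i = l.sum := by
  induction l generalizing n with
  | nil => simp [part]
  | cons a t ih =>
    obtain ⟨n, rfl⟩ : ∃ k, n = k + 1 := Nat.exists_eq_add_one.2 (by simp at h; omega)
    rw [sum_range_succ', List.sum_cons, add_comm a]
    exact congrArg (· + a) (ih (by simpa using h))

lemma inSkew_iff {c : ℕ × ℕ} :
    InSkew α β c ↔ c.1 < α.length ∧ part β c.1 ≤ c.2 ∧ c.2 < part α c.1 := by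
  unfold InSkew InDiagram
  rcases lt_or_ge c.1 β.length with h | h
  · omega
  · simp [part_eq_zero h]

lemma mem_skewCells {c : ℕ × ℕ} : c ∈ skewCells α β ↔ InSkew α β c := by
  rw [skewCells, mem_filter, mem_product, mem_range, mem_range, and_iff_right_iff_imp]
  intro h
  have := h.1.2
  have := part_le_sum α c.1
  exact ⟨h.1.1, by omega⟩

lemma skewCells_eq_biUnion (α β : List ℕ) :
    skewCells α β = (range α.length).biUnion fun i => {i} ×ˢ Ico (part β i) (part α i) := by
  ext c
  simp [mem_skewCells, inSkew_iff, Prod.ext_iff, and_assoc]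

lemma sum_skewCells (α β : List ℕ) (g : ℕ × ℕ → ℕ) :
    ∑ c ∈ skewCells α β, g c = ∑ i ∈ range α.length, ∑ j ∈ Ico (part β i) (part α i), g (i, j) := by
  rw [skewCells_eq_biUnion, sum_biUnion]
  · simp
  · intro i _ i' _ hii'
    simp only [Function.onFun, disjoint_left, mem_product, mem_singleton]
    rintro c ⟨rfl, -⟩ ⟨h, -⟩
    exact hii' h

lemma card_skewCells (hsub : SubComp β α) : #(skewCells α β) = skewSize α β := by
  have hle : ∀ i, part β i ≤ part α i := fun i => by
    rcases lt_or_ge i β.length with h | h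
    · exact hsub.2 i h
    · simp [part_eq_zero h]
  rw [card_eq_sum_ones, sum_skewCells, skewSize, ← sum_range_part α le_rfl,
    ← sum_range_part β hsub.1, eq_tsub_iff_add_eq_of_le (sum_le_sum fun i _ => hle i),
    ← sum_add_distrib]
  exact sum_congr rfl fun i _ => by simp [Nat.sub_add_cancel (hle i)]

end SkewDiagram

section HeckeStep

variable {α β : List ℕ}

lemma RowsStrict.lt_iff {T : ℕ × ℕ → ℕ} (hT : RowsStrict α β T) {c c' : ℕ × ℕ}
    (hc : InSkew α β c) (hc' : InSkew α β c') (hrow : c.1 = c'.1) :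
    T c < T c' ↔ c.2 < c'.2 := by
  obtain ⟨i, j⟩ := c
  obtain ⟨i', j'⟩ := c'
  obtain rfl : i = i' := hrow
  refine ⟨fun h => ?_, fun h => hT i j j' h hc hc'⟩
  rcases lt_trichotomy j j' with hj | rfl | hj
  · exact hj
  · exact absurd h (lt_irrefl _)
  · exact absurd (hT i j' j hj hc' hc) h.not_gt

theorem invNum_piOp_rdI {S T : ℕ × ℕ → ℕ} (hS : IsSIT α β S) (hT : IsSIT α β T) (hTS : T ≠ S)
    {i : ℕ} (hpi : piOp .rdI α β i S = T) : invNum α β T = invNum α β S + 1 := by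
  unfold piOp at hpi
  split_ifs at hpi with hdes hswap
  · subst hpi
    obtain ⟨hi, c, c', hc, hc', hSc, hSc', hrow⟩ := mem_filter.1 hdes
    have hlt : c'.1 < c.1 := by
      refine lt_of_le_of_ne hrow fun heq => ?_
      have hcol := (hS.2.1.lt_iff hc hc' heq.symm).1 (by omega)
      have := (hswap.2.1.lt_iff hc hc' heq.symm).2 hcol
      simp only [swapEntries, hSc, hSc', if_true, if_neg (Nat.succ_ne_self i)] at this
      omega
    rw [invNum_eq_card_inversions, invNum_eq_card_inversions]
    exact card_inversions_swapEntries
      (fun x hx y hy => hS.1.inj x y (mem_skewCells.1 hx) (mem_skewCells.1 hy))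
      (mem_skewCells.2 hc) (mem_skewCells.2 hc') hSc hSc' (Or.inl hlt)
  · have hi := (mem_filter.1 hdes).1
    obtain ⟨c, -, hc⟩ := hT.1.surj 1 (by rw [mem_Icc] at hi ⊢; omega)
    simp [← hpi] at hc
  · exact absurd hpi.symm hTS

end HeckeStep

section RowSuperstandard

variable {α β : List ℕ}

lemma Srow_lt_of_readBefore {p q : ℕ × ℕ} (hp : InSkew α β p) (hq : InSkew α β q)
    (hr : readBefore p q) : Srow α β q < Srow α β p := by
  have hp' := inSkew_iff.1 hp
  have hq' := inSkew_iff.1 hq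
  simp only [Srow, if_pos hp, if_pos hq]
  rcases hr with h | ⟨h, h₂⟩
  · have := sum_le_sum_of_subset (f := fun i => part α i - part β i)
      (range_subset_range.2 (Nat.succ_le_of_lt h))
    rw [sum_range_succ] at this
    omega
  · rw [h] at hp' ⊢
    omega

theorem invNum_Srow (hsub : SubComp β α) : invNum α β (Srow α β) = (skewSize α β).choose 2 := by
  rw [invNum_eq_card_inversions, ← card_skewCells hsub, ← card_readBefore_pairs, inversions]
  refine congrArg card (filter_congr fun p hp => and_iff_left_of_imp fun hr => ?_)
  rw [mem_product, mem_skewCells, mem_skewCells] at hp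
  exact Srow_lt_of_readBefore hp.1 hp.2 hr

end RowSuperstandard

section InitialTableau

variable {α β : List ℕ}

def IsFirstColCell (β : List ℕ) (c : ℕ × ℕ) : Prop := c.2 = 0 ∧ β.length ≤ c.1

noncomputable def rowTailCount (α β : List ℕ) (i : ℕ) : ℕ :=
  if i < β.length then part α i - part β i else part α i - 1

lemma aboveCount_add_rowTailCount_le {i i' : ℕ} (h : i' < i) (hi : i < α.length) :
    aboveCount α β i + rowTailCount α β i ≤ aboveCount α β i' := by
  unfold aboveCount
  rw [← sum_Ico_consecutive _ (Nat.succ_le_succ h.le) hi, add_comm]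
  gcongr
  exact single_le_sum (f := rowTailCount α β) (fun _ _ => Nat.zero_le _)
    (mem_Ico.2 ⟨h, Nat.lt_succ_self i⟩)

lemma S0_of_isFirstColCell {c : ℕ × ℕ} (hc : InSkew α β c) (h : IsFirstColCell β c) :
    S0 α β c = c.1 - β.length + 1 := by
  rw [S0, if_pos hc, if_pos (show c.2 = 0 ∧ β.length ≤ c.1 from h)]

lemma S0_of_not_isFirstColCell {c : ℕ × ℕ} (hc : InSkew α β c) (h : ¬ IsFirstColCell β c) :
    S0 α β c = α.length - β.length + aboveCount α β c.1 +
      (if c.1 < β.length then c.2 - part β c.1 + 1 else c.2) := by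
  rw [S0, if_pos hc, if_neg (show ¬(c.2 = 0 ∧ β.length ≤ c.1) from h)]

lemma S0_le_of_isFirstColCell {c : ℕ × ℕ} (hc : InSkew α β c) (h : IsFirstColCell β c) :
    S0 α β c ≤ α.length - β.length := by
  rw [S0_of_isFirstColCell hc h]
  have := (inSkew_iff.1 hc).1
  have := h.2
  omega

lemma S0_mem_Ioc_of_not_isFirstColCell {c : ℕ × ℕ} (hc : InSkew α β c)
    (h : ¬ IsFirstColCell β c) :
    α.length - β.length + aboveCount α β c.1 < S0 α β c ∧
      S0 α β c ≤ α.length - β.length + aboveCount α β c.1 + rowTailCount α β c.1 := by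
  rw [S0_of_not_isFirstColCell hc h, rowTailCount]
  have := inSkew_iff.1 hc
  unfold IsFirstColCell at h
  split_ifs <;> omega

lemma S0_lt_S0_of_row_lt {p q : ℕ × ℕ} (hp : InSkew α β p) (hq : InSkew α β q)
    (hrow : q.1 < p.1) (hq' : ¬ IsFirstColCell β q) : S0 α β p < S0 α β q := by
  have hSq := S0_mem_Ioc_of_not_isFirstColCell hq hq'
  by_cases hp' : IsFirstColCell β p
  · have := S0_le_of_isFirstColCell hp hp'
    omega
  · have hSp := S0_mem_Ioc_of_not_isFirstColCell hp hp'
    have := aboveCount_add_rowTailCount_le (β := β) hrow (inSkew_iff.1 hp).1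
    omega

lemma S0_lt_S0_of_readBefore {p q : ℕ × ℕ} (hp : InSkew α β p) (hq : InSkew α β q)
    (hr : readBefore p q) (h : p.1 = q.1 ∨ IsFirstColCell β q) : S0 α β q < S0 α β p := by
  have hp' : IsFirstColCell β p → IsFirstColCell β q ∧ q.1 < p.1 := by
    unfold IsFirstColCell readBefore at *
    omega
  by_cases hpF : IsFirstColCell β p
  · obtain ⟨hqF, hrow⟩ := hp' hpF
    rw [S0_of_isFirstColCell hp hpF, S0_of_isFirstColCell hq hqF]
    have := hqF.2
    omega
  by_cases hqF : IsFirstColCell β q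
  · have := S0_le_of_isFirstColCell hq hqF
    have := S0_mem_Ioc_of_not_isFirstColCell hp hpF
    omega
  have hrow : p.1 = q.1 := h.resolve_right hqF
  have hcol : q.2 < p.2 := by unfold readBefore at hr; omega
  have hp₁ := inSkew_iff.1 hp
  have := inSkew_iff.1 hq
  rw [S0_of_not_isFirstColCell hp hpF, S0_of_not_isFirstColCell hq hqF, hrow]
  rw [hrow] at hp₁
  split_ifs <;> omega

lemma mem_inversions_S0 {p q : ℕ × ℕ} :
    (p, q) ∈ inversions (skewCells α β) (S0 α β) ↔
      (p ∈ skewCells α β ∧ q ∈ skewCells α β) ∧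
        ((p.1 = q.1 ∧ q.2 < p.2) ∨ (q.1 < p.1 ∧ IsFirstColCell β q)) := by
  simp only [inversions, mem_filter, mem_product]
  refine and_congr_right fun ⟨hp, hq⟩ => ?_
  rw [mem_skewCells] at hp hq
  constructor
  · rintro ⟨hrow | hrow, hlt⟩
    · refine Or.inr ⟨hrow, by_contra fun hqF => ?_⟩
      exact lt_asymm hlt (S0_lt_S0_of_row_lt hp hq hrow hqF)
    · exact Or.inl hrow
  · rintro (hrow | hrow)
    · exact ⟨Or.inr hrow, S0_lt_S0_of_readBefore hp hq (Or.inr hrow) (Or.inl hrow.1)⟩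
    · exact ⟨Or.inl hrow.1, S0_lt_S0_of_readBefore hp hq (Or.inl hrow.1) (Or.inr hrow.2)⟩

lemma card_sameRow_readBefore_pairs (α β : List ℕ) :
    #{x ∈ skewCells α β ×ˢ skewCells α β | x.1.1 = x.2.1 ∧ x.2.2 < x.1.2} =
      ∑ i ∈ range α.length, (part α i - part β i).choose 2 := by
  have hrow : ∀ p ∈ skewCells α β,
      #{q ∈ skewCells α β | p.1 = q.1 ∧ q.2 < p.2} = p.2 - part β p.1 := fun p hp => by
    have := inSkew_iff.1 (mem_skewCells.1 hp)
    suffices {q ∈ skewCells α β | p.1 = q.1 ∧ q.2 < p.2} = {p.1} ×ˢ Ico (part β p.1) p.2 by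
      rw [this, card_product, card_singleton, one_mul, Nat.card_Ico]
    ext ⟨i, j⟩
    simp only [mem_filter, mem_skewCells, inSkew_iff, mem_product, mem_singleton, mem_Ico]
    constructor
    · rintro ⟨⟨-, h₁, -⟩, rfl, h₂⟩
      exact ⟨rfl, h₁, h₂⟩
    · rintro ⟨rfl, h₁, h₂⟩
      exact ⟨⟨this.1, h₁, by omega⟩, rfl, h₂⟩
  rw [card_filter_product, sum_congr rfl hrow, sum_skewCells]
  exact sum_congr rfl fun i _ => sum_Ico_sub_eq_choose_two _ _

lemma card_firstColCells_below (hα : IsComposition α) {i : ℕ} (hi : i ≤ α.length) :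
    #{q ∈ skewCells α β | q.1 < i ∧ IsFirstColCell β q} = i - β.length := by
  suffices {q ∈ skewCells α β | q.1 < i ∧ IsFirstColCell β q} = Ico β.length i ×ˢ {0} by
    rw [this, card_product, card_singleton, mul_one, Nat.card_Ico]
  refine Finset.ext fun ⟨k, j⟩ => ?_
  simp only [mem_filter, mem_product, mem_Ico, mem_singleton]
  simp only [mem_skewCells, inSkew_iff, IsFirstColCell]
  constructor
  · rintro ⟨-, h₁, rfl, h₂⟩
    exact ⟨⟨h₂, h₁⟩, rfl⟩
  · rintro ⟨⟨h₁, h₂⟩, rfl⟩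
    exact ⟨⟨by omega, by simp [part_eq_zero h₁], hα.part_pos (by omega)⟩, h₂, rfl, h₁⟩

theorem invNum_S0 (hα : IsComposition α) :
    invNum α β (S0 α β) = ∑ i ∈ range α.length, (part α i - part β i).choose 2 +
      ∑ i ∈ range α.length, (part α i - part β i) * (i - β.length) := by
  have hsplit : inversions (skewCells α β) (S0 α β) =
      {x ∈ skewCells α β ×ˢ skewCells α β | x.1.1 = x.2.1 ∧ x.2.2 < x.1.2} ∪
        {x ∈ skewCells α β ×ˢ skewCells α β | x.2.1 < x.1.1 ∧ IsFirstColCell β x.2} := by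
    ext ⟨p, q⟩
    rw [mem_inversions_S0, ← filter_or, mem_filter, mem_product]
  have hdisj : Disjoint
      {x ∈ skewCells α β ×ˢ skewCells α β | x.1.1 = x.2.1 ∧ x.2.2 < x.1.2}
      {x ∈ skewCells α β ×ˢ skewCells α β | x.2.1 < x.1.1 ∧ IsFirstColCell β x.2} :=
    disjoint_filter.2 fun _ _ h₁ h₂ => h₂.1.ne' h₁.1
  have hbelow : ∀ p ∈ skewCells α β,
      #{q ∈ skewCells α β | q.1 < p.1 ∧ IsFirstColCell β q} = p.1 - β.length := fun p hp =>
    card_firstColCells_below hα (inSkew_iff.1 (mem_skewCells.1 hp)).1.le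
  rw [invNum_eq_card_inversions, hsplit, card_union_of_disjoint hdisj, card_sameRow_readBefore_pairs,
    card_filter_product, sum_congr rfl hbelow, sum_skewCells]
  simp

end InitialTableau

lemma sum_choose_two_shifted {α β : List ℕ} (hm : β.length ≤ α.length) :
    ∑ i ∈ range β.length, (part α i - part β i).choose 2 +
        ∑ i ∈ Ico β.length α.length, (part α i + i - β.length).choose 2 =
      ∑ i ∈ range α.length, (part α i - part β i).choose 2 +
        ∑ i ∈ range α.length, (part α i - part β i) * (i - β.length) +
          (α.length - β.length).choose 3 := by
  have hsplit := sum_range_add_sum_Ico (fun i => (part α i - part β i).choose 2) hm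
  have hlow : ∑ i ∈ range α.length, (part α i - part β i) * (i - β.length) =
      ∑ i ∈ Ico β.length α.length, (part α i - part β i) * (i - β.length) := by
    rw [← sum_range_add_sum_Ico _ hm, sum_eq_zero fun i hi => ?_, zero_add]
    rw [mem_range] at hi
    simp [Nat.sub_eq_zero_of_le hi.le]
  have hhigh : ∑ i ∈ Ico β.length α.length, (part α i + i - β.length).choose 2 =
      ∑ i ∈ Ico β.length α.length, (part α i - part β i).choose 2 +
        ∑ i ∈ Ico β.length α.length, (i - β.length).choose 2 +
          ∑ i ∈ Ico β.length α.length, (part α i - part β i) * (i - β.length) := by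
    rw [← sum_add_distrib, ← sum_add_distrib]
    refine sum_congr rfl fun i hi => ?_
    rw [mem_Ico] at hi
    rw [part_eq_zero hi.1, Nat.sub_zero, Nat.add_sub_assoc hi.1, choose_two_add]
  have hcube : ∑ i ∈ Ico β.length α.length, (i - β.length).choose 2 =
      (α.length - β.length).choose 3 := by
    rw [sum_Ico_eq_sum_range, ← sum_range_choose_two]
    exact sum_congr rfl fun k _ => by rw [Nat.add_sub_cancel_left]
  omega

theorem skew_poset_graded_rank_general (α β : List ℕ)
    (hα : IsComposition α) (hsub : SubComp β α) :
    (∀ S T, IsSIT α β S → IsSIT α β T → T ≠ S →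
      (∃ i, 1 ≤ i ∧ i ≤ skewSize α β - 1 ∧ piOp .rdI α β i S = T) →
      invNum α β T = invNum α β S + 1) ∧
    invNum α β (Srow α β) = (skewSize α β).choose 2 ∧
    invNum α β (S0 α β) + (α.length - β.length).choose 3 =
      (∑ i ∈ Finset.range β.length, (part α i - part β i).choose 2) +
        (∑ i ∈ Finset.Ico β.length α.length, (part α i + i - β.length).choose 2) ∧
    invNum α β (Srow α β) +
        ((∑ i ∈ Finset.range β.length, (part α i - part β i).choose 2) +
          (∑ i ∈ Finset.Ico β.length α.length, (part α i + i - β.length).choose 2)) =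
      invNum α β (S0 α β) + (skewSize α β).choose 2 + (α.length - β.length).choose 3 := by
  have hSrow := invNum_Srow hsub
  have hS0 : invNum α β (S0 α β) + (α.length - β.length).choose 3 =
      (∑ i ∈ range β.length, (part α i - part β i).choose 2) +
        (∑ i ∈ Ico β.length α.length, (part α i + i - β.length).choose 2) := by
    rw [invNum_S0 hα, sum_choose_two_shifted hsub.1]
  refine ⟨fun S T hS hT hTS ⟨i, _, _, hpi⟩ => invNum_piOp_rdI hS hT hTS hpi, hSrow, hS0, ?_⟩
  omega

/-- the skew immaculate Hecke poset is graded by the number of inversions of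
the reading word: each nontrivial application of an operator `π_i^{rdI}` raises `inv` by
exactly `1`; moreover `inv(S^{row}_{α/β}) = C(N,2)`,
`inv(S^0_{α/β}) = Σ_{i≤ℓ(β)} C(α_i-β_i,2) + Σ_{i>ℓ(β)} C(α_i+i-ℓ(β)-1,2) - C(ℓ(α)-ℓ(β),3)`,
and hence the total rank is
`C(N,2) - Σ C(α_i-β_i,2) - Σ C(α_i+i-ℓ(β)-1,2) + C(ℓ(α)-ℓ(β),3)`. -/
theorem skew_poset_graded_rank (α β : List ℕ)
    (hα : IsComposition α) (hβ : IsComposition β) (hsub : SubComp β α)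
    (hN : 1 ≤ skewSize α β) :
    (∀ S T, IsSIT α β S → IsSIT α β T → T ≠ S →
      (∃ i, 1 ≤ i ∧ i ≤ skewSize α β - 1 ∧ piOp .rdI α β i S = T) →
      invNum α β T = invNum α β S + 1) ∧
    invNum α β (Srow α β) = (skewSize α β).choose 2 ∧
    invNum α β (S0 α β) + (α.length - β.length).choose 3 =
      (∑ i ∈ Finset.range β.length, (part α i - part β i).choose 2) +
        (∑ i ∈ Finset.Ico β.length α.length, (part α i + i - β.length).choose 2) ∧
    invNum α β (Srow α β) +
        ((∑ i ∈ Finset.range β.length, (part α i - part β i).choose 2) +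
          (∑ i ∈ Finset.Ico β.length α.length, (part α i + i - β.length).choose 2)) =
      invNum α β (S0 α β) + (skewSize α β).choose 2 + (α.length - β.length).choose 3 :=
  skew_poset_graded_rank_general α β hα hsub

end ImmaculateSkew
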